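/- arXiv:2007.11055 — 4 statements merged into one kernel-verified Lean document; each statement's English description precedes it below -/
import Mathlib

section
/- Let H ⊆ binom([n],k) be a homogeneous hypergraph (i.e. s-homogeneous for some s ≥ 2) with intersection pattern J ⊆ 2^[k] ∖ {[k]}. Then |H| ≤ |∂_{k−r(J)} H|. -/
open Finset

/-- A Δ-system (sunflower) with center `C`: a family of at least two sets such that
the intersection of any two distinct members equals `C`. -/
def IsDeltaSystem (D : Finset (Finset ℕ)) (C : Finset ℕ) : Prop :=
  2 ≤ D.card ∧ ∀ A ∈ D, ∀ B ∈ D, A ≠ B → A ∩ B = C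

/-- `A : Fin p → Finset ℕ` is an `a⃗`-partition of the set `E`. -/
def IsAPartition (p : ℕ) (a : Fin p → ℕ) (A : Fin p → Finset ℕ) (E : Finset ℕ) : Prop :=
  (∀ i, (A i).card = a i) ∧ (∀ i j, i ≠ j → Disjoint (A i) (A j)) ∧
    Finset.univ.sup A = E

/-- A semi-`(a⃗,b⃗)`-Δ-system with host `E0` and petals `E i j` (`i ∈ [p]`, `j ∈ [b i]`):
for some `a⃗`-partition `E0 = A 1 ∪ ⋯ ∪ A p`, for each `i` the family
`{E0, E i 1, …, E i (b i)}` is a Δ-system with center `E0 \ A i`. -/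
def IsSemiSystem (p : ℕ) (a b : Fin p → ℕ) (E0 : Finset ℕ)
    (E : (i : Fin p) → Fin (b i) → Finset ℕ) : Prop :=
  ∃ A : Fin p → Finset ℕ, IsAPartition p a A E0 ∧
    ∀ i : Fin p,
      (∀ j, E i j ≠ E0) ∧ Function.Injective (E i) ∧
      (∀ j, E0 ∩ E i j = E0 \ A i) ∧
      (∀ j j', j ≠ j' → E i j ∩ E i j' = E0 \ A i)

/-- An `(a⃗,b⃗)`-Δ-system: a semi-`(a⃗,b⃗)`-Δ-system in which the sets `E i j \ E0`
are pairwise disjoint. -/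
def IsABSystem (p : ℕ) (a b : Fin p → ℕ) (E0 : Finset ℕ)
    (E : (i : Fin p) → Fin (b i) → Finset ℕ) : Prop :=
  IsSemiSystem p a b E0 E ∧
    ∀ x y : (i : Fin p) × Fin (b i), x ≠ y →
      Disjoint (E x.1 x.2 \ E0) (E y.1 y.2 \ E0)

/-- The family described by the predicate `Fam` contains an `(a⃗,d)`-Δ-system, i.e. an
`(a⃗,b⃗)`-Δ-system with `b` a sequence of positive integers summing to `d`, all of whose
members belong to `Fam`. -/
def FamContainsADSystem (p : ℕ) (a : Fin p → ℕ) (d : ℕ) (Fam : Finset ℕ → Prop) : Prop :=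
  ∃ b : Fin p → ℕ, (∀ i, 0 < b i) ∧ (∑ i, b i) = d ∧
    ∃ E0, Fam E0 ∧ ∃ E : (i : Fin p) → Fin (b i) → Finset ℕ,
      (∀ i j, Fam (E i j)) ∧ IsABSystem p a b E0 E

/-- The finite family `H` contains an `(a⃗,d)`-Δ-system as a subfamily. -/
def ContainsADSystem (p : ℕ) (a : Fin p → ℕ) (d : ℕ) (H : Finset (Finset ℕ)) : Prop :=
  FamContainsADSystem p a d (· ∈ H)

/-- A family is `d`-wise-intersecting if every `d` of its members have a common element. -/
def WiseIntersecting (d : ℕ) (F : Finset (Finset ℕ)) : Prop :=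
  ∀ f : Fin d → Finset ℕ, (∀ i, f i ∈ F) → ∃ v, ∀ i, v ∈ f i

/-- Non-trivial `d`-wise-intersecting: `d`-wise-intersecting, but no element lies in
all members. -/
def NonTrivialWiseIntersecting (d : ℕ) (F : Finset (Finset ℕ)) : Prop :=
  WiseIntersecting d F ∧ ¬ ∃ v, ∀ A ∈ F, v ∈ A

/-- A family is intersecting if every two members have a nonempty intersection. -/
def IntersectingFam (F : Finset (Finset ℕ)) : Prop :=
  ∀ A ∈ F, ∀ B ∈ F, (A ∩ B).Nonempty

/-- Non-trivial intersecting: intersecting, but no element lies in all members. -/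
def NonTrivialIntersectingFam (F : Finset (Finset ℕ)) : Prop :=
  IntersectingFam F ∧ ¬ ∃ v, ∀ A ∈ F, v ∈ A

/-- The intersection structure `I(E,H) = {E ∩ E' : E' ∈ H \ {E}}`. -/
def interStruct (H : Finset (Finset ℕ)) (E : Finset ℕ) : Finset (Finset ℕ) :=
  (H.erase E).image (fun E' => E ∩ E')

/-- The projection `Π(S) = {i : S ∩ V i ≠ ∅}` with respect to the parts `V`. -/
def proj {k : ℕ} (V : Fin k → Finset ℕ) (S : Finset ℕ) : Finset (Fin k) :=
  Finset.univ.filter (fun i => (S ∩ V i).Nonempty)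

/-- `H ⊆ binom([n],k)` is `s`-homogeneous with intersection pattern
`J ⊆ 2^[k] ∖ {[k]}`: `H` is `k`-partite (with parts partitioning `[n] = Icc 1 n`),
`Π(I(E,H)) = J` for all `E ∈ H`, `J` is closed under intersection, and every set of
`I(E,H)` is the center of a Δ-system of size `s` formed by edges of `H` containing `E`. -/
def IsHomogeneousWith (n k s : ℕ) (H : Finset (Finset ℕ)) (J : Finset (Finset (Fin k))) :
    Prop :=
  ∃ V : Fin k → Finset ℕ,
    (∀ i j, i ≠ j → Disjoint (V i) (V j)) ∧
    Finset.univ.sup V = Finset.Icc 1 n ∧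
    (∀ E ∈ H, ∀ i, (E ∩ V i).card = 1) ∧
    (Finset.univ : Finset (Fin k)) ∉ J ∧
    (∀ E ∈ H, (interStruct H E).image (proj V) = J) ∧
    (∀ A ∈ J, ∀ B ∈ J, A ∩ B ∈ J) ∧
    (∀ E ∈ H, ∀ C ∈ interStruct H E,
      ∃ D : Finset (Finset ℕ), D ⊆ H ∧ E ∈ D ∧ D.card = s ∧ IsDeltaSystem D C)

/-- The rank `r(J) = min{|A| : A ⊆ [k], A ∉ J, no B ∈ J contains A}`. -/
noncomputable def patternRank {k : ℕ} (J : Finset (Finset (Fin k))) : ℕ :=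
  sInf {m : ℕ | ∃ A : Finset (Fin k), A ∉ J ∧ (∀ B ∈ J, ¬ A ⊆ B) ∧ A.card = m}

/-- The `i`-th shadow of a `k`-uniform family: all `(k-i)`-subsets of its edges. -/
def iShadow (k i : ℕ) (H : Finset (Finset ℕ)) : Finset (Finset ℕ) :=
  H.biUnion (fun E => Finset.powersetCard (k - i) E)

/-- `deg_H(E')`: the number of edges of `H` containing `E'`. -/
def degSet (H : Finset (Finset ℕ)) (E' : Finset ℕ) : ℕ :=
  (H.filter (fun F => E' ⊆ F)).card

/-- The weight `ω_H(E) = Σ_{E' ⊆ E, |E'| = k-1} 1 / deg_H(E')`. -/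
noncomputable def weight (k : ℕ) (H : Finset (Finset ℕ)) (E : Finset ℕ) : ℝ :=
  ∑ E' ∈ Finset.powersetCard (k - 1) E, (1 : ℝ) / (degSet H E' : ℝ)

/-- `deg_H(uv)` for a 3-graph: the number of edges containing both `u` and `v`. -/
def deg2 (H : Finset (Finset ℕ)) (u v : ℕ) : ℕ :=
  (H.filter (fun A => u ∈ A ∧ v ∈ A)).card

/-!
Choose `A ⊆ [k]` of size `r(J)` contained in no member of `J`, and send each edge `E` to its
trace on the parts indexed by `A`, an `r(J)`-subset of `E`. Two distinct edges with the same
trace would meet in every part of `A`, so the projection of their intersection, a member of `J`,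
would contain `A`. Hence the map is injective into `∂_{k−r(J)} H`.
-/

open Function

lemma exists_card_eq_patternRank {k : ℕ} {J : Finset (Finset (Fin k))} (hJ : univ ∉ J) :
    ∃ A : Finset (Fin k), (∀ B ∈ J, ¬ A ⊆ B) ∧ A.card = patternRank J := by
  have hne : {m : ℕ | ∃ A : Finset (Fin k), A ∉ J ∧ (∀ B ∈ J, ¬ A ⊆ B) ∧ A.card = m}.Nonempty :=
    ⟨k, univ, hJ, fun B hB hsub => hJ (univ_subset_iff.mp hsub ▸ hB), card_fin k⟩
  obtain ⟨A, -, hA, hAcard⟩ := Nat.sInf_mem hne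
  exact ⟨A, hA, hAcard⟩

lemma proj_inter_mem {k : ℕ} (V : Fin k → Finset ℕ) {H : Finset (Finset ℕ)}
    {J : Finset (Finset (Fin k))} {E E' : Finset ℕ} (hproj : (interStruct H E).image (proj V) = J)
    (hE' : E' ∈ H) (hne : E ≠ E') : proj V (E ∩ E') ∈ J :=
  hproj ▸ mem_image_of_mem _ (mem_image_of_mem _ (mem_erase.mpr ⟨hne.symm, hE'⟩))

section restrictParts

variable {k : ℕ} (V : Fin k → Finset ℕ) (A : Finset (Fin k))

def restrictParts (E : Finset ℕ) : Finset ℕ :=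
  A.biUnion fun i => E ∩ V i

variable {V A}

lemma restrictParts_subset (E : Finset ℕ) : restrictParts V A E ⊆ E :=
  biUnion_subset.mpr fun _ _ => inter_subset_left

lemma card_restrictParts (hV : Pairwise (Disjoint on V)) {E : Finset ℕ}
    (hE : ∀ i, (E ∩ V i).card = 1) : (restrictParts V A E).card = A.card := by
  rw [restrictParts, card_biUnion fun i _ j _ hij =>
    (hV hij).mono inter_subset_right inter_subset_right]
  simp [hE]

lemma subset_proj_inter_of_restrictParts_eq {E E' : Finset ℕ} (hE : ∀ i, (E ∩ V i).Nonempty)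
    (h : restrictParts V A E = restrictParts V A E') : A ⊆ proj V (E ∩ E') := by
  intro i hi
  obtain ⟨x, hx⟩ := hE i
  have hxA : x ∈ restrictParts V A E := mem_biUnion.mpr ⟨i, hi, hx⟩
  have hxE' : x ∈ E' := restrictParts_subset E' (h ▸ hxA)
  rw [mem_inter] at hx
  simp only [proj, mem_filter, mem_univ, true_and]
  exact ⟨x, mem_inter.mpr ⟨mem_inter.mpr ⟨hx.1, hxE'⟩, hx.2⟩⟩

theorem card_le_card_iShadow_of_forall_not_subset_proj {H : Finset (Finset ℕ)}
    (hV : Pairwise (Disjoint on V)) (hpart : ∀ E ∈ H, ∀ i, (E ∩ V i).card = 1)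
    (hA : ∀ E ∈ H, ∀ E' ∈ H, E ≠ E' → ¬ A ⊆ proj V (E ∩ E')) :
    H.card ≤ (iShadow k (k - A.card) H).card := by
  refine card_le_card_of_injOn (restrictParts V A) (fun E hE => ?_) fun E hE E' hE' h => ?_
  · have hcard : k - (k - A.card) = A.card := Nat.sub_sub_self (by simpa using A.card_le_univ)
    refine mem_biUnion.mpr ⟨E, hE, mem_powersetCard.mpr ⟨restrictParts_subset E, ?_⟩⟩
    rw [card_restrictParts hV (hpart E hE), hcard]
  · by_contra hne
    exact hA E hE E' hE' hne <| subset_proj_inter_of_restrictParts_eq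
      (fun i => card_pos.mp (by rw [hpart E hE i]; exact one_pos)) h

end restrictParts

theorem stmt13_general (n k : ℕ) (H : Finset (Finset ℕ)) (J : Finset (Finset (Fin k)))
    (hhom : ∃ s : ℕ, 2 ≤ s ∧ IsHomogeneousWith n k s H J) :
    H.card ≤ (iShadow k (k - patternRank J) H).card := by
  obtain ⟨-, -, V, hV, -, hpart, hunivJ, hproj, -, -⟩ := hhom
  obtain ⟨A, hA, hAcard⟩ := exists_card_eq_patternRank hunivJ
  rw [← hAcard]
  exact card_le_card_iShadow_of_forall_not_subset_proj (fun i j => hV i j) hpart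
    fun E hE E' hE' hne => hA _ (proj_inter_mem V (hproj E hE) hE' hne)

/-- If `H ⊆ binom([n],k)` is homogeneous (i.e. `s`-homogeneous for some
`s ≥ 2`) with intersection pattern `J`, then `|H| ≤ |∂_{k - r(J)} H|`. -/
theorem stmt13 (n k : ℕ) (H : Finset (Finset ℕ)) (J : Finset (Finset (Fin k)))
    (hH : H ⊆ Finset.powersetCard k (Finset.Icc 1 n))
    (hhom : ∃ s : ℕ, 2 ≤ s ∧ IsHomogeneousWith n k s H J) :
    H.card ≤ (iShadow k (k - patternRank J) H).card :=
  stmt13_general n k H J hhom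
end

section
/- Let d ≥ p ≥ 2, k > p, and let a⃗ = (a_1,…,a_p) be a sequence of positive integers with a_1+⋯+a_p = k. Then there exists a constant c(k,d) > 0 such that for every n and every hypergraph H ⊆ binom([n],k) that contains no (a⃗,d)-Δ-system as a subfamily, |∂H| ≥ c(k,d)·|H|. -/
open Finset

/-! ### Auxiliary lemmas for Statement 15 -/

/-- Step lemma: if a `(k-1)`-subset of an edge has degree larger than `|Avoid|`,
we can swap a vertex for a vertex outside `Avoid` and stay in `H`. -/
lemma myStep (H : Finset (Finset ℕ)) (k : ℕ) (hU : ∀ F ∈ H, F.card = k)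
    (G : Finset ℕ) (hG : G ∈ H) (x : ℕ) (hx : x ∈ G) (Avoid : Finset ℕ)
    (hdeg : Avoid.card + 1 ≤ degSet H (G.erase x)) :
    ∃ y, y ∉ Avoid ∧ insert y (G.erase x) ∈ H := by
  by_contra hcon
  push_neg at hcon
  have hsub : H.filter (fun F => G.erase x ⊆ F) ⊆
      Avoid.image (fun y => insert y (G.erase x)) := by
    intro F hF
    simp only [mem_filter] at hF
    obtain ⟨hFH, hGF⟩ := hF
    have hk1 : 1 ≤ k := by
      have h1 := hU G hG
      have h2 := card_pos.2 ⟨x, hx⟩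
      omega
    have hcard : (F \ G.erase x).card = 1 := by
      rw [card_sdiff_of_subset hGF, hU F hFH, card_erase_of_mem hx, hU G hG]
      omega
    obtain ⟨y, hy⟩ := card_eq_one.1 hcard
    have hFeq : F = insert y (G.erase x) := by
      have h1 : G.erase x ∪ (F \ G.erase x) = F := union_sdiff_of_subset hGF
      rw [← h1, hy]
      ext t
      simp only [mem_union, mem_insert, mem_singleton]
      tauto
    have hyA : y ∈ Avoid := by
      by_contra hyA
      exact hcon y hyA (hFeq ▸ hFH)
    exact mem_image.2 ⟨y, hyA, hFeq.symm⟩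
  have := (card_le_card hsub).trans card_image_le
  unfold degSet at hdeg
  omega

/-- Walk lemma: with uniformly large codegrees we can replace any subset `A'` of an
edge `G` by a set of fresh vertices avoiding `Avoid`, staying in `H`. -/
lemma myWalk (H : Finset (Finset ℕ)) (k C : ℕ) (hU : ∀ F ∈ H, F.card = k)
    (hdeg : ∀ G ∈ H, ∀ x ∈ G, C ≤ degSet H (G.erase x)) :
    ∀ m (A' G Avoid : Finset ℕ), G ∈ H → A' ⊆ G → G ⊆ Avoid →
      Avoid.card + m + 1 ≤ C → A'.card = m →
      ∃ S : Finset ℕ, S.card = m ∧ Disjoint S Avoid ∧ (G \ A') ∪ S ∈ H := by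
  intro m
  induction m with
  | zero =>
    intro A' G Avoid hG hAG _ _ hA
    rw [card_eq_zero] at hA
    subst hA
    exact ⟨∅, rfl, disjoint_empty_left _, by simpa using hG⟩
  | succ m ih =>
    intro A' G Avoid hG hAG hGA hC hA
    obtain ⟨x, hxA⟩ := card_pos.1 (by omega : 0 < A'.card)
    have hxG : x ∈ G := hAG hxA
    obtain ⟨y, hyA, hG1⟩ : ∃ y, y ∉ Avoid ∧ insert y (G.erase x) ∈ H := by
      apply myStep H k hU G hG x hxG Avoid
      have := hdeg G hG x hxG
      omega
    have hyG : y ∉ G := fun h => hyA (hGA h)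
    obtain ⟨S', hS'c, hS'd, hS'H⟩ := ih (A'.erase x) (insert y (G.erase x)) (insert y Avoid) hG1
      (by
        intro t ht
        rcases mem_erase.1 ht with ⟨htx, htA⟩
        exact mem_insert.2 (Or.inr (mem_erase.2 ⟨htx, hAG htA⟩)))
      (by
        intro t ht
        rcases mem_insert.1 ht with h | h
        · exact mem_insert.2 (Or.inl h)
        · exact mem_insert.2 (Or.inr (hGA (mem_of_mem_erase h))))
      (by have := card_insert_le y Avoid; omega)
      (by rw [card_erase_of_mem hxA]; omega)
    have hyS' : y ∉ S' := fun h => disjoint_left.1 hS'd h (mem_insert_self y Avoid)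
    have hkey : insert y (G.erase x) \ (A'.erase x) = insert y (G \ A') := by
      ext t
      simp only [mem_sdiff, mem_insert, mem_erase]
      constructor
      · rintro ⟨h1 | ⟨h1, h2⟩, h3⟩
        · exact Or.inl h1
        · right
          exact ⟨h2, fun htA => h3 ⟨h1, htA⟩⟩
      · rintro (rfl | ⟨h1, h2⟩)
        · exact ⟨Or.inl rfl, fun h => hyG (hAG h.2)⟩
        · refine ⟨Or.inr ⟨fun h => h2 (h ▸ hxA), h1⟩, fun h => h2 h.2⟩
    refine ⟨insert y S', ?_, ?_, ?_⟩
    · rw [card_insert_of_notMem hyS', hS'c]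
    · exact disjoint_insert_left.2 ⟨hyA, hS'd.mono_right (subset_insert _ _)⟩
    · have heq : (G \ A') ∪ insert y S' = (insert y (G.erase x) \ A'.erase x) ∪ S' := by
        rw [hkey]
        ext t
        simp only [mem_union, mem_insert]
        tauto
      rw [heq]
      exact hS'H

/-- Any set of the right cardinality admits an `a⃗`-partition. -/
lemma myPart : ∀ (p : ℕ) (a : Fin p → ℕ) (E : Finset ℕ), E.card = ∑ i, a i →
    ∃ A : Fin p → Finset ℕ, (∀ i, (A i).card = a i) ∧
      (∀ i j, i ≠ j → Disjoint (A i) (A j)) ∧ Finset.univ.sup A = E := by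
  intro p
  induction p with
  | zero =>
    intro a E hE
    refine ⟨fun i => i.elim0, fun i => i.elim0, fun i => i.elim0, ?_⟩
    have hE0 : E = ∅ := card_eq_zero.1 (by simpa using hE)
    simp [hE0]
  | succ p ih =>
    intro a E hE
    rw [Fin.sum_univ_succ] at hE
    obtain ⟨A0, hA0E, hA0c⟩ := Finset.exists_subset_card_eq
      (show a 0 ≤ E.card by omega)
    obtain ⟨A', hA'c, hA'd, hA's⟩ := ih (fun j => a j.succ) (E \ A0)
      (by
        rw [card_sdiff_of_subset hA0E, hE, hA0c]
        have h9 : ∑ i : Fin p, (fun j : Fin p => a j.succ) i = ∑ i : Fin p, a i.succ := rfl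
        rw [h9]
        omega)
    have hA'sub : ∀ j, A' j ⊆ E \ A0 := by
      intro j t ht
      rw [← hA's]
      exact Finset.mem_sup.2 ⟨j, mem_univ j, ht⟩
    refine ⟨Fin.cases A0 A', ?_, ?_, ?_⟩
    · intro i
      induction i using Fin.cases with
      | zero => simpa using hA0c
      | succ j => simpa using hA'c j
    · intro i j hij
      induction i using Fin.cases with
      | zero =>
        induction j using Fin.cases with
        | zero => exact absurd rfl hij
        | succ j' =>
          simp only [Fin.cases_zero, Fin.cases_succ]
          exact (disjoint_sdiff).mono_right (hA'sub j')
      | succ i' =>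
        induction j using Fin.cases with
        | zero =>
          simp only [Fin.cases_zero, Fin.cases_succ]
          exact ((disjoint_sdiff).mono_right (hA'sub i')).symm
        | succ j' =>
          simp only [Fin.cases_succ]
          exact hA'd i' j' (fun h => hij (by rw [h]))
    · ext t
      rw [Finset.mem_sup]
      constructor
      · rintro ⟨i, -, hti⟩
        induction i using Fin.cases with
        | zero => exact hA0E (by simpa using hti)
        | succ j => exact (sdiff_subset (s := E) (t := A0)) (hA'sub j (by simpa using hti))
      · intro htE
        by_cases ht0 : t ∈ A0
        · exact ⟨0, mem_univ _, by simpa using ht0⟩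
        · have : t ∈ Finset.univ.sup A' := by
            rw [hA's]
            exact mem_sdiff.2 ⟨htE, ht0⟩
          obtain ⟨j, -, hj⟩ := Finset.mem_sup.1 this
          exact ⟨j.succ, mem_univ _, by simpa using hj⟩

/-- Key lemma: if every `(k-1)`-subset of every edge has degree at least `(d+2)k+1`,
then `H` contains an `(a⃗,d)`-Δ-system. -/
lemma myLemmaA (p k d : ℕ) (hp : 2 ≤ p) (hpd : p ≤ d)
    (a : Fin p → ℕ) (ha : ∀ i, 0 < a i) (hsum : ∑ i, a i = k)
    (H : Finset (Finset ℕ)) (hU : ∀ F ∈ H, F.card = k) (hne : H.Nonempty)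
    (hdeg : ∀ G ∈ H, ∀ x ∈ G, (d+2)*k + 1 ≤ degSet H (G.erase x)) :
    ContainsADSystem p a d H := by
  obtain ⟨E0, hE0⟩ := hne
  have hE0c : E0.card = k := hU E0 hE0
  obtain ⟨A, hAc, hAd, hAs⟩ := myPart p a E0 (by rw [hE0c, hsum])
  have hAE : ∀ i, A i ⊆ E0 := by
    intro i t ht
    rw [← hAs]
    exact Finset.mem_sup.2 ⟨i, mem_univ i, ht⟩
  have hak : ∀ i, a i ≤ k := by
    intro i
    rw [← hsum]
    exact Finset.single_le_sum (fun _ _ => Nat.zero_le _) (mem_univ i)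
  have hz : 0 < p := by omega
  set z : Fin p := ⟨0, hz⟩ with hzdef
  set b : Fin p → ℕ := fun i => if i = z then d - p + 1 else 1 with hb
  have hbpos : ∀ i, 0 < b i := by
    intro i
    simp only [hb]
    split <;> omega
  have hbsum : ∑ i, b i = d := by
    have h1 : ∀ i ∈ Finset.univ, b i = (if i = z then d - p else 0) + 1 := by
      intro i _
      simp only [hb]
      split <;> omega
    rw [Finset.sum_congr rfl h1, Finset.sum_add_distrib, Finset.sum_ite_eq' Finset.univ z
      (fun _ => d - p)]
    simp only [mem_univ, if_true, Finset.sum_const, card_univ, Fintype.card_fin, smul_eq_mul]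
    omega
  have hcardι : Fintype.card ((i : Fin p) × Fin (b i)) = d := by
    simp [Fintype.card_sigma, hbsum]
  have petals : ∀ T : Finset ((i : Fin p) × Fin (b i)), ∃ S : ((i : Fin p) × Fin (b i)) → Finset ℕ,
      (∀ x ∈ T, (S x).card = a x.1 ∧ Disjoint (S x) E0 ∧ (E0 \ A x.1) ∪ S x ∈ H) ∧
      (∀ x ∈ T, ∀ y ∈ T, x ≠ y → Disjoint (S x) (S y)) := by
    intro T
    induction T using Finset.induction_on with
    | empty => exact ⟨fun _ => ∅, by simp, by simp⟩
    | @insert x T hxT ihT =>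
      obtain ⟨S, hS1, hS2⟩ := ihT
      set Avoid := E0 ∪ T.biUnion (fun y => S y) with hAv
      have hAvE : E0 ⊆ Avoid := subset_union_left
      have hAvS : ∀ y ∈ T, S y ⊆ Avoid := by
        intro y hy
        exact (subset_biUnion_of_mem (fun y => S y) hy).trans subset_union_right
      have hTc : T.card + 1 ≤ d := by
        have h1 := card_le_univ (insert x T)
        rw [card_insert_of_notMem hxT, hcardι] at h1
        exact h1
      have hAvc : Avoid.card ≤ k + T.card * k := by
        calc Avoid.card ≤ E0.card + (T.biUnion (fun y => S y)).card := card_union_le _ _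
          _ ≤ k + ∑ y ∈ T, (S y).card := by
              rw [hE0c]
              exact Nat.add_le_add_left (card_biUnion_le) k
          _ ≤ k + T.card * k := by
              have h2 : ∑ y ∈ T, (S y).card ≤ ∑ _y ∈ T, k := by
                apply Finset.sum_le_sum
                intro y hy
                rw [(hS1 y hy).1]
                exact hak y.1
              rw [Finset.sum_const, smul_eq_mul] at h2
              omega
      obtain ⟨Snew, hSnc, hSnd, hSnH⟩ := myWalk H k ((d+2)*k+1) hU hdeg (a x.1) (A x.1) E0 Avoid
        hE0 (hAE x.1) hAvE
        (by
          have h3 : T.card * k + k ≤ d * k := by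
            calc T.card * k + k = (T.card + 1) * k := by ring
              _ ≤ d * k := Nat.mul_le_mul_right k hTc
          have h4 : (d+2)*k = d*k + 2*k := by ring
          have h5 := hak x.1
          omega)
        (hAc x.1)
      refine ⟨Function.update S x Snew, ?_, ?_⟩
      · intro y hy
        rcases mem_insert.1 hy with rfl | hyT
        · rw [Function.update_self]
          exact ⟨hSnc, hSnd.mono_right hAvE, hSnH⟩
        · rw [Function.update_of_ne (by rintro rfl; exact hxT hyT)]
          exact hS1 y hyT
      · intro y hy w hw hyw
        rcases mem_insert.1 hy with rfl | hyT <;> rcases mem_insert.1 hw with rfl | hwT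
        · exact absurd rfl hyw
        · rw [Function.update_self, Function.update_of_ne (by rintro rfl; exact hxT hwT)]
          exact hSnd.mono_right (hAvS w hwT)
        · rw [Function.update_self, Function.update_of_ne (by rintro rfl; exact hxT hyT)]
          exact (hSnd.mono_right (hAvS y hyT)).symm
        · rw [Function.update_of_ne (by rintro rfl; exact hxT hyT),
            Function.update_of_ne (by rintro rfl; exact hxT hwT)]
          exact hS2 y hyT w hwT hyw
  obtain ⟨S, hS1u, hS2u⟩ := petals Finset.univ
  have hS1 : ∀ x : (i : Fin p) × Fin (b i),
      (S x).card = a x.1 ∧ Disjoint (S x) E0 ∧ (E0 \ A x.1) ∪ S x ∈ H :=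
    fun x => hS1u x (mem_univ x)
  have hS2 : ∀ x y : (i : Fin p) × Fin (b i), x ≠ y → Disjoint (S x) (S y) :=
    fun x y h => hS2u x (mem_univ x) y (mem_univ y) h
  have hSne : ∀ x : (i : Fin p) × Fin (b i), (S x).Nonempty := by
    intro x
    apply card_pos.1
    rw [(hS1 x).1]
    exact ha x.1
  have hSE0 : ∀ (x : (i : Fin p) × Fin (b i)) (t : ℕ), t ∈ S x → t ∉ E0 :=
    fun x t ht hte => disjoint_left.1 (hS1 x).2.1 ht hte
  refine ⟨b, hbpos, hbsum, E0, hE0, fun i j => (E0 \ A i) ∪ S ⟨i, j⟩,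
    fun i j => (hS1 ⟨i, j⟩).2.2, ⟨A, ⟨hAc, hAd, hAs⟩, ?_⟩, ?_⟩
  · intro i
    refine ⟨?_, ?_, ?_, ?_⟩
    · intro j heq
      obtain ⟨s, hs⟩ := hSne ⟨i, j⟩
      have hsE : s ∈ E0 := heq ▸ (mem_union.2 (Or.inr hs))
      exact hSE0 ⟨i, j⟩ s hs hsE
    · intro j j' heq
      by_contra hne'
      have hd : Disjoint (S ⟨i, j⟩) (S ⟨i, j'⟩) := by
        apply hS2
        intro hh
        apply hne'
        injection hh
      obtain ⟨s, hs⟩ := hSne ⟨i, j⟩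
      have heq' : (E0 \ A i) ∪ S ⟨i, j⟩ = (E0 \ A i) ∪ S ⟨i, j'⟩ := heq
      have hs2 : s ∈ (E0 \ A i) ∪ S ⟨i, j'⟩ := heq' ▸ (mem_union.2 (Or.inr hs))
      rcases mem_union.1 hs2 with h | h
      · exact hSE0 ⟨i, j⟩ s hs (mem_sdiff.1 h).1
      · exact disjoint_left.1 hd hs h
    · intro j
      ext t
      simp only [mem_inter, mem_union, mem_sdiff]
      have hts := hSE0 ⟨i, j⟩ t
      tauto
    · intro j j' hjj'
      have hd : Disjoint (S ⟨i, j⟩) (S ⟨i, j'⟩) := by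
        apply hS2
        intro hh
        apply hjj'
        injection hh
      ext t
      simp only [mem_inter, mem_union, mem_sdiff]
      have h1 := hSE0 ⟨i, j⟩ t
      have h2 := hSE0 ⟨i, j'⟩ t
      have h3 : t ∈ S ⟨i, j⟩ → t ∉ S ⟨i, j'⟩ := fun ht => disjoint_left.1 hd ht
      tauto
  · intro x y hxy
    have hsub1 : ((E0 \ A x.1) ∪ S ⟨x.1, x.2⟩) \ E0 ⊆ S x := by
      intro t ht
      rcases mem_sdiff.1 ht with ⟨ht1, ht2⟩
      rcases mem_union.1 ht1 with h | h
      · exact absurd (mem_sdiff.1 h).1 ht2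
      · exact h
    have hsub2 : ((E0 \ A y.1) ∪ S ⟨y.1, y.2⟩) \ E0 ⊆ S y := by
      intro t ht
      rcases mem_sdiff.1 ht with ⟨ht1, ht2⟩
      rcases mem_union.1 ht1 with h | h
      · exact absurd (mem_sdiff.1 h).1 ht2
      · exact h
    exact (hS2 x y hxy).mono hsub1 hsub2

/-- Peeling lemma: a system-free uniform family satisfies `|H| ≤ (d+2)k·|∂H|`. -/
lemma myLemmaB (p k d : ℕ) (hp : 2 ≤ p) (hpd : p ≤ d)
    (a : Fin p → ℕ) (ha : ∀ i, 0 < a i) (hsum : ∑ i, a i = k) :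
    ∀ N (H : Finset (Finset ℕ)), H.card ≤ N →
    (∀ F ∈ H, F.card = k) → ¬ ContainsADSystem p a d H →
    H.card ≤ (d+2)*k * (iShadow k 1 H).card := by
  intro N
  induction N with
  | zero =>
    intro H hN _ _
    omega
  | succ N ih =>
    intro H hN hU hfree
    rcases H.eq_empty_or_nonempty with rfl | hne
    · simp [iShadow]
    · have hex : ∃ G ∈ H, ∃ x ∈ G, degSet H (G.erase x) < (d+2)*k + 1 := by
        by_contra hcon
        push_neg at hcon
        exact hfree (myLemmaA p k d hp hpd a ha hsum H hU hne hcon)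
      obtain ⟨G, hG, x, hx, hdegG⟩ := hex
      set E' := G.erase x with hE'
      set H' := H.filter (fun F => ¬ E' ⊆ F) with hH'
      have hsplit : (H.filter (fun F => E' ⊆ F)).card + H'.card = H.card := by
        rw [hH']
        exact card_filter_add_card_filter_not _
      have hGD : G ∈ H.filter (fun F => E' ⊆ F) := mem_filter.2 ⟨hG, erase_subset x G⟩
      have hH'card : H'.card ≤ N := by
        have := card_pos.2 ⟨G, hGD⟩
        omega
      have hH'sub : H' ⊆ H := filter_subset _ _
      have hfree' : ¬ ContainsADSystem p a d H' := by
        intro hc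
        apply hfree
        obtain ⟨b, h1, h2, E0, hE0, E, hE, h3⟩ := hc
        exact ⟨b, h1, h2, E0, hH'sub hE0, E, fun i j => hH'sub (hE i j), h3⟩
      have hIH := ih H' hH'card (fun F hF => hU F (hH'sub hF)) hfree'
      have hE'mem : E' ∈ iShadow k 1 H :=
        mem_biUnion.2 ⟨G, hG, mem_powersetCard.2 ⟨erase_subset x G,
          by rw [hE', card_erase_of_mem hx, hU G hG]⟩⟩
      have hshsub : iShadow k 1 H' ⊆ (iShadow k 1 H).erase E' := by
        intro t ht
        obtain ⟨F, hF, htF⟩ := mem_biUnion.1 ht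
        refine mem_erase.2 ⟨?_, mem_biUnion.2 ⟨F, hH'sub hF, htF⟩⟩
        rintro rfl
        exact (mem_filter.1 hF).2 (mem_powersetCard.1 htF).1
      have hcard2 : (iShadow k 1 H').card + 1 ≤ (iShadow k 1 H).card := by
        have h1 := card_le_card hshsub
        rw [card_erase_of_mem hE'mem] at h1
        have h2 := card_pos.2 ⟨E', hE'mem⟩
        omega
      have hD : (H.filter (fun F => E' ⊆ F)).card ≤ (d+2)*k := by
        have : degSet H E' = (H.filter (fun F => E' ⊆ F)).card := rfl
        omega
      calc H.card = (H.filter (fun F => E' ⊆ F)).card + H'.card := hsplit.symm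
        _ ≤ (d+2)*k + (d+2)*k * (iShadow k 1 H').card := by omega
        _ = (d+2)*k * ((iShadow k 1 H').card + 1) := by ring
        _ ≤ (d+2)*k * (iShadow k 1 H).card := Nat.mul_le_mul_left _ hcard2

/-- Let `d ≥ p ≥ 2`, `k > p`, and `a⃗` positive with `Σ a_i = k`. There is
a constant `c(k,d) > 0` such that every `H ⊆ binom([n],k)` with no `(a⃗,d)`-Δ-system
satisfies `|∂H| ≥ c(k,d)·|H|`. -/
theorem stmt15 (p k d : ℕ) (hp : 2 ≤ p) (hpd : p ≤ d) (hpk : p < k)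
    (a : Fin p → ℕ) (ha : ∀ i, 0 < a i) (hsum : ∑ i, a i = k) :
    ∃ c : ℝ, 0 < c ∧ ∀ n : ℕ, ∀ H : Finset (Finset ℕ),
      H ⊆ Finset.powersetCard k (Finset.Icc 1 n) →
      ¬ ContainsADSystem p a d H →
      c * (H.card : ℝ) ≤ ((iShadow k 1 H).card : ℝ) := by
  have hk : 0 < k := by omega
  have hpos : (0 : ℝ) < ((d+2)*k : ℕ) := by
    have : 0 < (d+2)*k := by positivity
    exact_mod_cast this
  refine ⟨1 / (((d+2)*k : ℕ) : ℝ), by positivity, ?_⟩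
  intro n H hHsub hfree
  have hU : ∀ F ∈ H, F.card = k := fun F hF => (mem_powersetCard.1 (hHsub hF)).2
  have hB := myLemmaB p k d hp hpd a ha hsum H.card H le_rfl hU hfree
  rw [div_mul_eq_mul_div, div_le_iff₀ hpos, one_mul]
  calc (H.card : ℝ) ≤ (((d+2)*k * (iShadow k 1 H).card : ℕ) : ℝ) := by exact_mod_cast hB
    _ = ((iShadow k 1 H).card : ℝ) * (((d+2)*k : ℕ) : ℝ) := by push_cast; ring
end

section
/- Let d ≥ p ≥ 2, k > p, s ≥ k·d + 1, and let a⃗ = (a_1,…,a_p) be a sequence of positive integers with a_1+⋯+a_p = k. Let H ⊆ binom([n],k) and let H* be an s-homogeneous subgraph of H. Let E₀ ∈ H* and let E₀ = A_1 ∪ ⋯ ∪ A_p be an a⃗-partition of E₀. Suppose there exists i₀ ∈ [p] such that E₀ ∖ A_i ∈ I(E₀, H*) for all i ∈ [p] ∖ {i₀}, and there exists E ∈ H with E ∩ E₀ = E₀ ∖ A_{i₀}. Then H contains an (a⃗,d)-Δ-system as a subfamily. -/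
open Finset

lemma greedy_pick (D : Finset (Finset ℕ)) (E0 C : Finset ℕ) (hC : C ⊆ E0)
    (hD : ∀ X ∈ D, ∀ Y ∈ D, X ≠ Y → X ∩ Y = C)
    (F : Finset ℕ) (m : ℕ) (hm : m + F.card + 1 ≤ D.card) :
    ∃ T ⊆ D.erase E0, T.card = m ∧ ∀ X ∈ T, Disjoint (X \ E0) F := by
  classical
  have hdisjpair : ∀ X ∈ D.erase E0, ∀ Y ∈ D.erase E0, X ≠ Y →
      Disjoint (X \ E0) (Y \ E0) := by
    intro X hX Y hY hXY
    rw [Finset.disjoint_left]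
    intro x hx hx'
    have hxE0 : x ∉ E0 := (Finset.mem_sdiff.mp hx).2
    have hmem : x ∈ X ∩ Y :=
      Finset.mem_inter.mpr ⟨(Finset.mem_sdiff.mp hx).1, (Finset.mem_sdiff.mp hx').1⟩
    rw [hD X (Finset.mem_of_mem_erase hX) Y (Finset.mem_of_mem_erase hY) hXY] at hmem
    exact hxE0 (hC hmem)
  have hbad : ((D.erase E0).filter (fun X => ¬ Disjoint (X \ E0) F)).card ≤ F.card := by
    apply Finset.card_le_card_of_injOn
      (f := fun X => if h : ((X \ E0) ∩ F).Nonempty then ((X \ E0) ∩ F).min' h else 0)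
    · intro X hX
      have hX' := Finset.mem_filter.mp hX
      have hne : ((X \ E0) ∩ F).Nonempty := Finset.not_disjoint_iff_nonempty_inter.mp hX'.2
      simp only [dif_pos hne]
      exact Finset.mem_of_mem_inter_right (Finset.min'_mem _ hne)
    · intro X hX Y hY hf
      by_contra hXY
      have hXm := Finset.mem_filter.mp (Finset.mem_coe.mp hX)
      have hYm := Finset.mem_filter.mp (Finset.mem_coe.mp hY)
      have hXn : ((X \ E0) ∩ F).Nonempty := Finset.not_disjoint_iff_nonempty_inter.mp hXm.2
      have hYn : ((Y \ E0) ∩ F).Nonempty := Finset.not_disjoint_iff_nonempty_inter.mp hYm.2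
      simp only [dif_pos hXn, dif_pos hYn] at hf
      have h1 := Finset.min'_mem _ hXn
      have h2 := Finset.min'_mem _ hYn
      rw [hf] at h1
      have hd := hdisjpair X hXm.1 Y hYm.1 hXY
      rw [Finset.disjoint_left] at hd
      exact hd (Finset.mem_of_mem_inter_left h1) (Finset.mem_of_mem_inter_left h2)
  have hsplit := Finset.card_filter_add_card_filter_not
    (s := D.erase E0) (p := fun X => Disjoint (X \ E0) F)
  have herase : D.card - 1 ≤ (D.erase E0).card := Finset.pred_card_le_card_erase
  have hgood : m ≤ ((D.erase E0).filter (fun X => Disjoint (X \ E0) F)).card := by omega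
  obtain ⟨T, hT, hTcard⟩ := Finset.exists_subset_card_eq hgood
  exact ⟨T, hT.trans (Finset.filter_subset _ _), hTcard,
    fun X hX => (Finset.mem_filter.mp (hT hX)).2⟩

/-- Let `d ≥ p ≥ 2`, `k > p`, `s ≥ k·d + 1`, `a⃗` positive with
`Σ a_i = k`, `H ⊆ binom([n],k)` and `H*` an `s`-homogeneous subgraph of `H`. Let
`E₀ ∈ H*` with `a⃗`-partition `E₀ = A 1 ∪ ⋯ ∪ A p`. If there is `i₀` with
`E₀ ∖ A i ∈ I(E₀,H*)` for all `i ≠ i₀` and some `E ∈ H` with `E ∩ E₀ = E₀ ∖ A i₀`,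
then `H` contains an `(a⃗,d)`-Δ-system. -/
theorem stmt16 (n p k d s : ℕ) (hp : 2 ≤ p) (hpd : p ≤ d) (hpk : p < k)
    (hs : k * d + 1 ≤ s)
    (a : Fin p → ℕ) (ha : ∀ i, 0 < a i) (hsum : ∑ i, a i = k)
    (H Hstar : Finset (Finset ℕ))
    (hH : H ⊆ Finset.powersetCard k (Finset.Icc 1 n))
    (hsub : Hstar ⊆ H)
    (hhom : ∃ J : Finset (Finset (Fin k)), IsHomogeneousWith n k s Hstar J)
    (E0 : Finset ℕ) (hE0 : E0 ∈ Hstar)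
    (A : Fin p → Finset ℕ) (hA : IsAPartition p a A E0)
    (i0 : Fin p)
    (hI : ∀ i : Fin p, i ≠ i0 → E0 \ A i ∈ interStruct Hstar E0)
    (hE : ∃ E ∈ H, E ∩ E0 = E0 \ A i0) :
    ContainsADSystem p a d H := by
  classical
  -- basic facts
  obtain ⟨J, V, hV1, hV2, hV3, hV4, hV5, hV6, hdelta⟩ := hhom
  obtain ⟨Eext, hEextH, hEextcap⟩ := hE
  obtain ⟨hAcard, hAdisj, hAsup⟩ := hA
  have hE0card : E0.card = k := (Finset.mem_powersetCard.mp (hH (hsub hE0))).2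
  have hAsub : ∀ i, A i ⊆ E0 := fun i => hAsup ▸ Finset.le_sup (Finset.mem_univ i)
  have hak : ∀ i, a i ≤ k := by
    intro i
    rw [← hsum]
    exact Finset.single_le_sum (fun j _ => Nat.zero_le (a j)) (Finset.mem_univ i)
  have hcenter : ∀ i, (E0 \ A i).card = k - a i := by
    intro i
    rw [Finset.card_sdiff_of_subset (hAsub i), hAcard i, hE0card]
  have hdiffcard : ∀ (i : Fin p) (X : Finset ℕ), X.card = k → E0 ∩ X = E0 \ A i →
      (X \ E0).card = a i := by
    intro i X hXk hXcap
    have h1 := Finset.card_sdiff_add_card_inter X E0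
    rw [Finset.inter_comm, hXcap, hcenter i, hXk] at h1
    have := hak i
    omega
  -- the delta systems
  have hDex : ∀ i : Fin p, ∃ Di : Finset (Finset ℕ), i ≠ i0 →
      Di ⊆ Hstar ∧ E0 ∈ Di ∧ Di.card = s ∧ IsDeltaSystem Di (E0 \ A i) := by
    intro i
    by_cases h : i = i0
    · exact ⟨∅, fun h' => absurd h h'⟩
    · obtain ⟨Di, h1, h2, h3, h4⟩ := hdelta E0 hE0 _ (hI i h)
      exact ⟨Di, fun _ => ⟨h1, h2, h3, h4⟩⟩
  choose D hD using hDex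
  have hpetal : ∀ i : Fin p, i ≠ i0 → ∀ X ∈ (D i).erase E0,
      X ∈ Hstar ∧ E0 ∩ X = E0 \ A i ∧ (X \ E0).card = a i := by
    intro i hi X hX
    obtain ⟨hDsub, hE0D, hDcard, hDs2, hDs⟩ := hD i hi
    have hXD : X ∈ D i := Finset.mem_of_mem_erase hX
    have hXne : X ≠ E0 := Finset.ne_of_mem_erase hX
    have hXstar : X ∈ Hstar := hDsub hXD
    have hcap : E0 ∩ X = E0 \ A i := hDs E0 hE0D X hXD (Ne.symm hXne)
    have hXk : X.card = k := (Finset.mem_powersetCard.mp (hH (hsub hXstar))).2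
    exact ⟨hXstar, hcap, hdiffcard i X hXk hcap⟩
  -- facts about Eext
  have hEextk : Eext.card = k := (Finset.mem_powersetCard.mp (hH hEextH)).2
  have hEextcap' : E0 ∩ Eext = E0 \ A i0 := by rw [Finset.inter_comm]; exact hEextcap
  have hEextdiff : (Eext \ E0).card = a i0 := hdiffcard i0 Eext hEextk hEextcap'
  have hEextne : Eext ≠ E0 := by
    intro h
    subst h
    obtain ⟨x, hx⟩ := Finset.card_pos.mp (hAcard i0 ▸ ha i0)
    have hx0 : x ∈ Eext := hAsub i0 hx
    have : x ∈ Eext \ A i0 := by rw [← hEextcap, Finset.inter_self]; exact hx0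
    exact (Finset.mem_sdiff.mp this).2 hx
  -- the sequence b
  have hnt : Nontrivial (Fin p) := Fin.nontrivial_iff_two_le.mpr hp
  obtain ⟨j0, hj0⟩ := exists_ne i0
  set b : Fin p → ℕ := fun i => if i = j0 then d - (p - 1) else 1 with hbdef
  have hbi0 : b i0 = 1 := by simp [hbdef, Ne.symm hj0]
  have hbpos : ∀ i, 0 < b i := by
    intro i
    simp only [hbdef]
    split <;> omega
  have hble : ∀ i, b i ≤ d := by
    intro i
    simp only [hbdef]
    split <;> omega
  have hbsum : ∑ i, b i = d := by
    rw [← Finset.add_sum_erase _ b (Finset.mem_univ j0)]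
    have h1 : ∑ i ∈ Finset.univ.erase j0, b i = p - 1 := by
      have hone : ∀ i ∈ Finset.univ.erase j0, b i = 1 := fun i hi => by
        simp [hbdef, Finset.ne_of_mem_erase hi]
      rw [Finset.sum_congr rfl hone, Finset.sum_const, smul_eq_mul, mul_one,
        Finset.card_erase_of_mem (Finset.mem_univ j0), Finset.card_univ,
        Fintype.card_fin]
    rw [h1]
    simp only [hbdef, if_pos rfl]
    omega
  -- the key sum bound
  have hkey : ∀ (i : Fin p) (S : Finset (Fin p)), i0 ∉ S → i ∉ S → i ≠ i0 →
      b i * a i + a i0 + ∑ i' ∈ S, b i' * a i' ≤ k * d := by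
    intro i S hi0S hiS hii0
    have h1 : b i * a i + b i0 * a i0 + ∑ i' ∈ S, b i' * a i' =
        ∑ j ∈ insert i (insert i0 S), b j * a j := by
      rw [Finset.sum_insert (by simp [hiS, hii0]), Finset.sum_insert hi0S]
      ring
    have h2 : ∑ j ∈ insert i (insert i0 S), b j * a j ≤ ∑ j, b j * a j :=
      Finset.sum_le_sum_of_subset (Finset.subset_univ _)
    have h3 : ∑ j, b j * a j ≤ ∑ j, d * a j :=
      Finset.sum_le_sum (fun j _ => Nat.mul_le_mul_right _ (hble j))
    have h4 : ∑ j, d * a j = d * k := by rw [← Finset.mul_sum, hsum]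
    rw [hbi0, one_mul] at h1
    have h5 : d * k = k * d := Nat.mul_comm d k
    omega
  -- the main induction
  have main : ∀ S : Finset (Fin p), i0 ∉ S → ∃ g : Fin p → Finset (Finset ℕ),
      (∀ i ∈ S, g i ⊆ (D i).erase E0 ∧ (g i).card = b i ∧
        ∀ X ∈ g i, Disjoint (X \ E0) (Eext \ E0)) ∧
      (∀ i ∈ S, ∀ i' ∈ S, i ≠ i' → ∀ X ∈ g i, ∀ Y ∈ g i',
        Disjoint (X \ E0) (Y \ E0)) := by
    intro S
    induction S using Finset.induction_on with
    | empty => exact fun _ => ⟨fun _ => ∅, by simp, by simp⟩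
    | @insert i S hiS ih =>
      intro hi0
      have hii0 : i ≠ i0 := fun h => hi0 (h ▸ Finset.mem_insert_self i S)
      have hi0S : i0 ∉ S := fun h => hi0 (Finset.mem_insert_of_mem h)
      obtain ⟨g, hg1, hg2⟩ := ih hi0S
      set F : Finset ℕ := (Eext \ E0) ∪
        S.biUnion (fun i' => (g i').biUnion (fun X => X \ E0)) with hFdef
      have hFcard : F.card ≤ a i0 + ∑ i' ∈ S, b i' * a i' := by
        calc F.card ≤ (Eext \ E0).card +
            (S.biUnion (fun i' => (g i').biUnion (fun X => X \ E0))).card :=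
              Finset.card_union_le _ _
          _ ≤ a i0 + ∑ i' ∈ S, b i' * a i' := by
            apply Nat.add_le_add (le_of_eq hEextdiff)
            calc (S.biUnion (fun i' => (g i').biUnion (fun X => X \ E0))).card
                ≤ ∑ i' ∈ S, ((g i').biUnion (fun X => X \ E0)).card :=
                  Finset.card_biUnion_le
              _ ≤ ∑ i' ∈ S, b i' * a i' := by
                apply Finset.sum_le_sum
                intro i' hi'
                have hi'0 : i' ≠ i0 := fun h => hi0S (h ▸ hi')
                obtain ⟨hgsub, hgcard, _⟩ := hg1 i' hi'
                calc ((g i').biUnion (fun X => X \ E0)).card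
                    ≤ ∑ X ∈ g i', (X \ E0).card := Finset.card_biUnion_le
                  _ = ∑ X ∈ g i', a i' := Finset.sum_congr rfl
                      (fun X hX => (hpetal i' hi'0 X (hgsub hX)).2.2)
                  _ = b i' * a i' := by rw [Finset.sum_const, hgcard, smul_eq_mul]
      obtain ⟨hDsub, hE0D, hDcard, hDs2, hDs⟩ := hD i hii0
      have hm : b i + F.card + 1 ≤ (D i).card := by
        have h1 := hkey i S hi0S hiS hii0
        have h2 : b i ≤ b i * a i := Nat.le_mul_of_pos_right _ (ha i)
        rw [hDcard]
        omega
      obtain ⟨T, hT1, hT2, hT3⟩ :=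
        greedy_pick (D i) E0 (E0 \ A i) Finset.sdiff_subset hDs F (b i) hm
      refine ⟨fun i' => if i' = i then T else g i', ?_, ?_⟩
      · intro i'' hi''
        rcases Finset.mem_insert.mp hi'' with h | h
        · subst h
          simp only [if_pos rfl]
          exact ⟨hT1, hT2, fun X hX =>
            (hT3 X hX).mono_right Finset.subset_union_left⟩
        · have hne : i'' ≠ i := fun hh => hiS (hh ▸ h)
          simp only [if_neg hne]
          exact hg1 i'' h
      · intro i1 hi1 i2 hi2 h12 X hX Y hY
        have hsubF : ∀ i' ∈ S, ∀ Z ∈ g i', Z \ E0 ⊆ F := by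
          intro i' hi' Z hZ
          intro x hx
          exact Finset.mem_union_right _ (Finset.mem_biUnion.mpr
            ⟨i', hi', Finset.mem_biUnion.mpr ⟨Z, hZ, hx⟩⟩)
        rcases Finset.mem_insert.mp hi1 with h1 | h1 <;>
          rcases Finset.mem_insert.mp hi2 with h2 | h2
        · exact absurd (h1.trans h2.symm) h12
        · subst h1
          simp only [if_pos rfl] at hX
          have hne2 : i2 ≠ i1 := fun hh => hiS (hh ▸ h2)
          simp only [if_neg hne2] at hY
          exact (hT3 X hX).mono_right (hsubF i2 h2 Y hY)
        · subst h2
          simp only [if_pos rfl] at hY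
          have hne1 : i1 ≠ i2 := fun hh => hiS (hh ▸ h1)
          simp only [if_neg hne1] at hX
          exact ((hT3 Y hY).mono_right (hsubF i1 h1 X hX)).symm
        · have hne1 : i1 ≠ i := fun hh => hiS (hh ▸ h1)
          have hne2 : i2 ≠ i := fun hh => hiS (hh ▸ h2)
          simp only [if_neg hne1] at hX
          simp only [if_neg hne2] at hY
          exact hg2 i1 h1 i2 h2 h12 X hX Y hY
  obtain ⟨g, hg1, hg2⟩ := main (Finset.univ.erase i0) (Finset.notMem_erase i0 _)
  have hmemS : ∀ i : Fin p, i ≠ i0 → i ∈ Finset.univ.erase i0 :=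
    fun i h => Finset.mem_erase.mpr ⟨h, Finset.mem_univ i⟩
  set g' : Fin p → Finset (Finset ℕ) := fun i => if i = i0 then {Eext} else g i
    with hg'def
  have hcard' : ∀ i, (g' i).card = b i := by
    intro i
    by_cases h : i = i0
    · subst h; simp [hg'def, hbi0]
    · simp only [hg'def, if_neg h]
      exact (hg1 i (hmemS i h)).2.1
  have hprops : ∀ i, ∀ X ∈ g' i, X ∈ H ∧ X ≠ E0 ∧ E0 ∩ X = E0 \ A i := by
    intro i X hX
    by_cases h : i = i0
    · simp only [hg'def, if_pos h, Finset.mem_singleton] at hX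
      subst hX
      rw [h]
      exact ⟨hEextH, hEextne, hEextcap'⟩
    · simp only [hg'def, if_neg h] at hX
      have hX' := (hg1 i (hmemS i h)).1 hX
      obtain ⟨hXstar, hcap, _⟩ := hpetal i h X hX'
      exact ⟨hsub hXstar, Finset.ne_of_mem_erase hX', hcap⟩
  have hpair : ∀ i, ∀ X ∈ g' i, ∀ Y ∈ g' i, X ≠ Y → X ∩ Y = E0 \ A i := by
    intro i X hX Y hY hXY
    by_cases h : i = i0
    · simp only [hg'def, if_pos h, Finset.mem_singleton] at hX hY
      exact absurd (hX.trans hY.symm) hXY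
    · simp only [hg'def, if_neg h] at hX hY
      obtain ⟨hDsub, hE0D, hDcard, hDs2, hDs⟩ := hD i h
      exact hDs X (Finset.mem_of_mem_erase ((hg1 i (hmemS i h)).1 hX))
        Y (Finset.mem_of_mem_erase ((hg1 i (hmemS i h)).1 hY)) hXY
  have hcross : ∀ i, ∀ X ∈ g' i, ∀ i', ∀ Y ∈ g' i', (i ≠ i' ∨ X ≠ Y) →
      Disjoint (X \ E0) (Y \ E0) := by
    intro i X hX i' Y hY hor
    by_cases hii : i = i'
    · subst hii
      have hXY : X ≠ Y := by
        rcases hor with h | h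
        · exact absurd rfl h
        · exact h
      have hcap := hpair i X hX Y hY hXY
      rw [Finset.disjoint_left]
      intro x hx hx'
      have : x ∈ X ∩ Y := Finset.mem_inter.mpr
        ⟨(Finset.mem_sdiff.mp hx).1, (Finset.mem_sdiff.mp hx').1⟩
      rw [hcap] at this
      exact (Finset.mem_sdiff.mp hx).2 (Finset.mem_sdiff.mp this).1
    · by_cases h : i = i0
      · have hi'0 : i' ≠ i0 := fun hh => hii (h.trans hh.symm)
        simp only [hg'def, if_pos h, Finset.mem_singleton] at hX
        simp only [hg'def, if_neg hi'0] at hY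
        subst hX
        exact ((hg1 i' (hmemS i' hi'0)).2.2 Y hY).symm
      · by_cases h' : i' = i0
        · simp only [hg'def, if_pos h', Finset.mem_singleton] at hY
          simp only [hg'def, if_neg h] at hX
          subst hY
          exact (hg1 i (hmemS i h)).2.2 X hX
        · simp only [hg'def, if_neg h] at hX
          simp only [hg'def, if_neg h'] at hY
          exact hg2 i (hmemS i h) i' (hmemS i' h') hii X hX Y hY
  -- enumeration of each g' i
  have henum : ∀ i : Fin p, ∃ f : Fin (b i) → Finset ℕ,
      Function.Injective f ∧ ∀ j, f j ∈ g' i := by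
    intro i
    refine ⟨fun j => ((g' i).equivFin.symm (finCongr (hcard' i).symm j) : Finset ℕ),
      ?_, ?_⟩
    · intro j j' hjj'
      exact (finCongr (hcard' i).symm).injective
        ((g' i).equivFin.symm.injective (Subtype.ext hjj'))
    · intro j
      exact ((g' i).equivFin.symm (finCongr (hcard' i).symm j)).2
  choose Efun hEinj hEmem using henum
  -- assemble
  refine ⟨b, hbpos, hbsum, E0, hsub hE0, Efun, ?_, ?_, ?_⟩
  · intro i j
    exact (hprops i _ (hEmem i j)).1
  · refine ⟨A, ⟨hAcard, hAdisj, hAsup⟩, ?_⟩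
    intro i
    refine ⟨?_, hEinj i, ?_, ?_⟩
    · intro j
      exact (hprops i _ (hEmem i j)).2.1
    · intro j
      exact (hprops i _ (hEmem i j)).2.2
    · intro j j' hjj'
      exact hpair i _ (hEmem i j) _ (hEmem i j') (fun hh => hjj' (hEinj i hh))
  · rintro ⟨i, j⟩ ⟨i', j'⟩ hxy
    apply hcross i _ (hEmem i j) i' _ (hEmem i' j')
    by_cases hii : i = i'
    · subst hii
      right
      intro hXY
      exact hxy (by rw [hEinj i hXY])
    · exact Or.inl hii
end

section
/- Let d ≥ p ≥ 2, k > p, s ≥ k·d + 1, and let a⃗ = (a_1,…,a_p) be a sequence of positive integers with a_1+⋯+a_p = k. Let H ⊆ binom([n],k) be a hypergraph that contains no (a⃗,d)-Δ-system as a subfamily, and let H* be an s-homogeneous subgraph of H with intersection pattern J. Suppose r(J) = k−1 and J contains exactly k−1 sets of size k−1. Let E ∈ H* and let v ∈ E be the vertex contained in all (k−1)-element sets of I(E,H*). Then v ∈ F for every F ∈ H with |F ∩ E| ≥ k − a_1. -/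
open Finset

/-! Let `c` be the part containing `v`. A `(k-1)`-set of `I(E,H*)` projecting to `[k] ∖ {c}`
would be `E ∖ {v}`, which the hypothesis on `v` excludes; so the `k-1` sets of size `k-1` in `J`
are the `[k] ∖ {c'}` with `c' ≠ c`, and by ∩-closure `J` contains `[k] ∖ S` for every nonempty
`S ∌ c`. Hence for every edge `X ∋ v` of `H*` and every nonempty `S ⊆ X` missing `v`, the set
`X ∖ S` is the center of an `s`-element Δ-system of `H*` through `X`.

If `v ∉ F`, one petal of such a Δ-system through `E` gives an edge `E' ∋ v` of `H*` with
`|E' ∩ F| = k - a₁` exactly. Partition `E'` with `A₁ = E' ∖ F`; every other part lies in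
`E' ∩ F` and misses `v`, so it is the removed part of a Δ-system through `E'`. Take `F` as the
single petal for `A₁` and choose `bᵢ` petals for `Aᵢ` (`i ≥ 2`, `b₂ + ⋯ + b_p = d - 1`) greedily,
so that their parts outside `E'` are pairwise disjoint and miss `F`. A vertex outside `E'` lies
in at most one petal of a Δ-system through `E'`, so the at most `k (d - bᵢ)` vertices used before
the petals for `Aᵢ` block at most that many of them, and `s ≥ k d + 1` leaves enough. The result
is an `(a⃗,d)`-Δ-system in `H`. -/

section Partition

variable {α ι : Type*} [DecidableEq α] [DecidableEq ι]

theorem Finset.pairwiseDisjoint_update_insert {A : ι → Finset α} {s : Finset ι} {i : ι}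
    {X Y : Finset α} (hi : i ∉ s) (hY : Y ⊆ X) (hA : (s : Set ι).PairwiseDisjoint A)
    (hAs : s.sup A = X \ Y) :
    ((insert i s : Finset ι) : Set ι).PairwiseDisjoint (Function.update A i Y) ∧
      (insert i s).sup (Function.update A i Y) = X := by
  have hne : ∀ j ∈ s, j ≠ i := fun j hj => ne_of_mem_of_not_mem hj hi
  constructor
  · rw [coe_insert]
    refine (hA.mono_on fun j hj => (Function.update_of_ne (hne j hj) _ _).le).insert_of_notMem
      hi fun j hj => ?_
    rw [Function.update_self, Function.update_of_ne (hne j hj)]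
    exact disjoint_sdiff.mono_right (hAs ▸ le_sup hj)
  · rw [sup_insert, Function.update_self,
      sup_congr rfl fun j hj => Function.update_of_ne (hne j hj) _ _, hAs, sup_eq_union,
      union_sdiff_of_subset hY]

theorem Finset.exists_pairwiseDisjoint_card_eq (f : ι → ℕ) (s : Finset ι) (X : Finset α)
    (hX : X.card = ∑ i ∈ s, f i) :
    ∃ A : ι → Finset α, (∀ i ∈ s, (A i).card = f i) ∧ (s : Set ι).PairwiseDisjoint A ∧
      s.sup A = X := by
  induction s using Finset.induction_on generalizing X with
  | empty =>
    refine ⟨fun _ => ∅, by simp, by simp, ?_⟩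
    rw [sup_empty, bot_eq_empty, eq_comm, ← card_eq_zero, hX, sum_empty]
  | @insert i s hi ih =>
    rw [sum_insert hi] at hX
    obtain ⟨Y, hYX, hY⟩ := X.exists_subset_card_eq (n := f i) (by omega)
    obtain ⟨A, hAcard, hAdisj, hAsup⟩ := ih (X \ Y) (by rw [card_sdiff_of_subset hYX]; omega)
    obtain ⟨hdisj, hsup⟩ := pairwiseDisjoint_update_insert hi hYX hAdisj hAsup
    refine ⟨Function.update A i Y, fun j hj => ?_, hdisj, hsup⟩
    rcases mem_insert.mp hj with rfl | hj
    · rwa [Function.update_self]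
    · rw [Function.update_of_ne (ne_of_mem_of_not_mem hj hi)]
      exact hAcard j hj

end Partition

theorem exists_isAPartition_eq {p : ℕ} {a : Fin p → ℕ} {E0 Y : Finset ℕ} (i₀ : Fin p)
    (hY : Y ⊆ E0) (hYcard : Y.card = a i₀) (hE0 : E0.card = ∑ i, a i) :
    ∃ A, IsAPartition p a A E0 ∧ A i₀ = Y := by
  obtain ⟨A, hAcard, hAdisj, hAsup⟩ := exists_pairwiseDisjoint_card_eq a (univ.erase i₀) (E0 \ Y)
    (by rw [card_sdiff_of_subset hY, hE0, ← add_sum_erase _ _ (mem_univ i₀), hYcard]; omega)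
  obtain ⟨hdisj, hsup⟩ := pairwiseDisjoint_update_insert (notMem_erase i₀ univ) hY hAdisj hAsup
  rw [insert_erase (mem_univ i₀), coe_univ] at hdisj
  rw [insert_erase (mem_univ i₀)] at hsup
  refine ⟨Function.update A i₀ Y, ⟨fun i => ?_, fun i j hij => hdisj (Set.mem_univ i)
    (Set.mem_univ j) hij, hsup⟩, Function.update_self ..⟩
  by_cases hi : i = i₀
  · subst hi
    rwa [Function.update_self]
  · rw [Function.update_of_ne hi]
    exact hAcard i (mem_erase.mpr ⟨hi, mem_univ i⟩)

namespace IsDeltaSystem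

variable {D : Finset (Finset ℕ)} {C E0 : Finset ℕ}

theorem disjoint_sdiff (hD : IsDeltaSystem D C) (hC : C ⊆ E0) {X Y : Finset ℕ} (hX : X ∈ D)
    (hY : Y ∈ D) (hXY : X ≠ Y) : Disjoint (X \ E0) (Y \ E0) := by
  rw [disjoint_left]
  intro w hwX hwY
  have hw : w ∈ X ∩ Y := mem_inter.mpr ⟨(mem_sdiff.mp hwX).1, (mem_sdiff.mp hwY).1⟩
  rw [hD.2 X hX Y hY hXY] at hw
  exact (mem_sdiff.mp hwX).2 (hC hw)

theorem exists_subset_disjoint_sdiff (hD : IsDeltaSystem D C) (hC : C ⊆ E0) (hE0 : E0 ∈ D)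
    (W : Finset ℕ) (m : ℕ) (hm : W.card + m + 1 ≤ D.card) :
    ∃ P ⊆ D.erase E0, P.card = m ∧ ∀ X ∈ P, Disjoint (X \ E0) W := by
  classical
  -- each `w ∈ W` lies outside `E0` in at most one member of `D`
  have hbad : ((D.erase E0).filter fun X => ¬ Disjoint (X \ E0) W).card ≤ W.card := by
    refine card_le_card_of_forall_subsingleton (fun X w => w ∈ X \ E0) ?_ ?_
    · intro X hX
      obtain ⟨w, hwX, hwW⟩ := not_disjoint_iff.mp (mem_filter.mp hX).2
      exact ⟨w, hwW, hwX⟩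
    · intro w _ X hX Y hY
      by_contra hXY
      exact disjoint_left.mp (hD.disjoint_sdiff hC (mem_of_mem_erase (mem_filter.mp hX.1).1)
        (mem_of_mem_erase (mem_filter.mp hY.1).1) hXY) hX.2 hY.2
  have hsplit := card_filter_add_card_filter_not (s := D.erase E0)
    (fun X => Disjoint (X \ E0) W)
  rw [card_erase_of_mem hE0] at hsplit
  obtain ⟨P, hP, hPcard⟩ := exists_subset_card_eq (s := (D.erase E0).filter
    fun X => Disjoint (X \ E0) W) (n := m) (by omega)
  exact ⟨P, hP.trans (filter_subset _ _), hPcard, fun X hX => (mem_filter.mp (hP hX)).2⟩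

end IsDeltaSystem

theorem Finset.card_biUnion_biUnion_le {ι β γ : Type*} [DecidableEq γ] {s : Finset ι}
    {P : ι → Finset β} {f : β → Finset γ} {k : ℕ} (hf : ∀ i ∈ s, ∀ X ∈ P i, (f X).card ≤ k) :
    (s.biUnion fun i => (P i).biUnion f).card ≤ k * ∑ i ∈ s, (P i).card := by
  calc (s.biUnion fun i => (P i).biUnion f).card ≤ ∑ i ∈ s, ∑ X ∈ P i, (f X).card :=
        card_biUnion_le.trans (sum_le_sum fun i _ => card_biUnion_le)
    _ ≤ ∑ i ∈ s, ∑ _X ∈ P i, k := by gcongr with i hi X hX; exact hf i hi X hX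
    _ = k * ∑ i ∈ s, (P i).card := by simp only [sum_const, smul_eq_mul, mul_sum, mul_comm]

theorem exists_petals_pairwise_disjoint_sdiff {ι : Type*} [DecidableEq ι] (E0 W0 : Finset ℕ)
    {k : ℕ} (hk : 0 < k) (D : ι → Finset (Finset ℕ)) (C : ι → Finset ℕ) (b : ι → ℕ)
    (s : Finset ι) (hD : ∀ i ∈ s, IsDeltaSystem (D i) (C i)) (hC : ∀ i ∈ s, C i ⊆ E0)
    (hE0 : ∀ i ∈ s, E0 ∈ D i) (hsdiff : ∀ i ∈ s, ∀ X ∈ D i, (X \ E0).card ≤ k)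
    (hcard : ∀ i ∈ s, W0.card + k * ∑ j ∈ s, b j + 1 ≤ (D i).card) :
    ∃ P : ι → Finset (Finset ℕ), (∀ i ∈ s, P i ⊆ (D i).erase E0 ∧ (P i).card = b i) ∧
      (∀ i ∈ s, ∀ X ∈ P i, Disjoint (X \ E0) W0) ∧
      (∀ i ∈ s, ∀ j ∈ s, ∀ X ∈ P i, ∀ Y ∈ P j, (i ≠ j ∨ X ≠ Y) →
        Disjoint (X \ E0) (Y \ E0)) := by
  induction s using Finset.induction_on with
  | empty => exact ⟨fun _ => ∅, by simp, by simp, by simp⟩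
  | @insert i s hi ih =>
    have hne : ∀ j ∈ s, j ≠ i := fun j hj => ne_of_mem_of_not_mem hj hi
    have hi' := mem_insert_self i s
    obtain ⟨P, hP, hPW0, hPdisj⟩ := ih (fun j hj => hD j (mem_insert_of_mem hj))
      (fun j hj => hC j (mem_insert_of_mem hj)) (fun j hj => hE0 j (mem_insert_of_mem hj))
      (fun j hj => hsdiff j (mem_insert_of_mem hj)) fun j hj =>
        le_trans (by gcongr; exact subset_insert i s) (hcard j (mem_insert_of_mem hj))
    set W := W0 ∪ s.biUnion fun j => (P j).biUnion (· \ E0)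
    have hWcard : W.card ≤ W0.card + k * ∑ j ∈ s, b j := by
      rw [← sum_congr rfl fun j hj => (hP j hj).2]
      exact (card_union_le _ _).trans (Nat.add_le_add_left (card_biUnion_biUnion_le
        fun j hj X hX => hsdiff j (mem_insert_of_mem hj) X (mem_of_mem_erase ((hP j hj).1 hX))) _)
    have hWsub : ∀ j ∈ s, ∀ Y ∈ P j, Y \ E0 ⊆ W := fun j hj Y hY =>
      ((subset_biUnion_of_mem (· \ E0) hY).trans
        (subset_biUnion_of_mem (fun j => (P j).biUnion (· \ E0)) hj)).trans subset_union_right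
    obtain ⟨Pi, hPiD, hPicard, hPiW⟩ := (hD i hi').exists_subset_disjoint_sdiff (hC i hi')
      (hE0 i hi') W (b i) (by have := hcard i hi'; rw [sum_insert hi] at this; nlinarith)
    have hQ : ∀ j ∈ insert i s, ∀ X ∈ Function.update P i Pi j,
        (j = i ∧ X ∈ Pi) ∨ (j ∈ s ∧ X ∈ P j) := fun j hj X hX => by
      rcases mem_insert.mp hj with rfl | hj
      · exact Or.inl ⟨rfl, by simpa using hX⟩
      · exact Or.inr ⟨hj, by simpa [hne j hj] using hX⟩
    refine ⟨Function.update P i Pi, fun j hj => ?_, fun j hj X hX => ?_,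
      fun j hj j' hj' X hX Y hY hXY => ?_⟩
    · rcases mem_insert.mp hj with rfl | hj
      · simpa using ⟨hPiD, hPicard⟩
      · simpa [hne j hj] using hP j hj
    · rcases hQ j hj X hX with ⟨-, hXP⟩ | ⟨hj, hXP⟩
      · exact (hPiW X hXP).mono_right subset_union_left
      · exact hPW0 j hj X hXP
    · rcases hQ j hj X hX with ⟨hji, hXP⟩ | ⟨hjs, hXP⟩ <;>
        rcases hQ j' hj' Y hY with ⟨hj'i, hYP⟩ | ⟨hj's, hYP⟩
      · exact (hD i hi').disjoint_sdiff (hC i hi') (mem_of_mem_erase (hPiD hXP))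
          (mem_of_mem_erase (hPiD hYP)) (hXY.resolve_left (not_not.mpr (hji.trans hj'i.symm)))
      · exact (hPiW X hXP).mono_right (hWsub j' hj's Y hYP)
      · exact ((hPiW Y hYP).mono_right (hWsub j hjs X hXP)).symm
      · exact hPdisj j hjs j' hj's X hXP Y hYP hXY

theorem Finset.inter_eq_of_inter_eq_of_disjoint_sdiff {α : Type*} [DecidableEq α]
    {X Y E0 C : Finset α} (hX : E0 ∩ X = C) (hY : E0 ∩ Y = C)
    (h : Disjoint (X \ E0) (Y \ E0)) : X ∩ Y = C := by
  subst hX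
  ext w
  have hw := Finset.ext_iff.mp hY w
  have hd : w ∈ X \ E0 → w ∉ Y \ E0 := fun hwX => disjoint_left.mp h hwX
  simp only [mem_inter, mem_sdiff] at hw hd ⊢
  tauto

theorem famContainsADSystem_of_petals {p d : ℕ} {a b : Fin p → ℕ} {Fam : Finset ℕ → Prop}
    (hb : ∀ i, 0 < b i) (hbd : ∑ i, b i = d) {E0 : Finset ℕ} (hE0 : Fam E0)
    {A : Fin p → Finset ℕ} (hA : IsAPartition p a A E0) (Q : Fin p → Finset (Finset ℕ))
    (hQcard : ∀ i, (Q i).card = b i)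
    (hQ : ∀ i, ∀ X ∈ Q i, Fam X ∧ X ≠ E0 ∧ E0 ∩ X = E0 \ A i)
    (hdisj : ∀ i j, ∀ X ∈ Q i, ∀ Y ∈ Q j, (i ≠ j ∨ X ≠ Y) → Disjoint (X \ E0) (Y \ E0)) :
    FamContainsADSystem p a d Fam := by
  let E : (i : Fin p) → Fin (b i) → Finset ℕ := fun i j =>
    (Q i).equivFin.symm (finCongr (hQcard i).symm j)
  have hEQ : ∀ i j, E i j ∈ Q i := fun i j => coe_mem _
  have hEinj : ∀ i, Function.Injective (E i) := fun i =>
    Subtype.val_injective.comp ((Q i).equivFin.symm.injective.comp (finCongr _).injective)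
  refine ⟨b, hb, hbd, E0, hE0, E, fun i j => (hQ i _ (hEQ i j)).1, ⟨A, hA, fun i => ?_⟩, ?_⟩
  · refine ⟨fun j => (hQ i _ (hEQ i j)).2.1, hEinj i, fun j => (hQ i _ (hEQ i j)).2.2,
      fun j j' hjj' => ?_⟩
    exact inter_eq_of_inter_eq_of_disjoint_sdiff (hQ i _ (hEQ i j)).2.2 (hQ i _ (hEQ i j')).2.2
      (hdisj i i _ (hEQ i j) _ (hEQ i j') (Or.inr ((hEinj i).ne hjj')))
  · rintro ⟨i, j⟩ ⟨i', j'⟩ hne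
    refine hdisj i i' _ (hEQ i j) _ (hEQ i' j') ?_
    by_cases hii' : i = i'
    · subst hii'
      exact Or.inr ((hEinj i).ne fun h => hne (by rw [h]))
    · exact Or.inl hii'

section Projection

variable {k : ℕ} {V : Fin k → Finset ℕ} {X : Finset ℕ}

theorem mem_proj_of_mem {S : Finset ℕ} {i : Fin k} {u : ℕ} (hu : u ∈ S) (hui : u ∈ V i) :
    i ∈ proj V S := by
  simp only [proj, mem_filter, mem_univ, true_and]
  exact ⟨u, mem_inter.mpr ⟨hu, hui⟩⟩

theorem proj_singleton (hV : ∀ i j, i ≠ j → Disjoint (V i) (V j)) {c : Fin k} {v : ℕ}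
    (hv : v ∈ V c) : proj V {v} = {c} := by
  ext i
  refine ⟨fun hi => ?_, fun hi => mem_singleton.mp hi ▸ mem_proj_of_mem (mem_singleton_self v) hv⟩
  obtain ⟨w, hw⟩ := (mem_filter.mp hi).2
  obtain ⟨rfl, hwi⟩ : w = v ∧ w ∈ V i := by simpa using hw
  by_contra hne
  exact disjoint_left.mp (hV i c (by simpa using hne)) hwi hv

theorem mem_proj_iff_of_subset {C : Finset ℕ} {i : Fin k} {u : ℕ} (hX : (X ∩ V i).card = 1)
    (hC : C ⊆ X) (hu : u ∈ X) (hui : u ∈ V i) : i ∈ proj V C ↔ u ∈ C := by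
  refine ⟨fun hi => ?_, fun h => mem_proj_of_mem h hui⟩
  obtain ⟨w, hw⟩ := (mem_filter.mp hi).2
  have hwu : w = u := card_le_one.mp hX.le w (mem_inter.mpr ⟨hC (mem_inter.mp hw).1,
    (mem_inter.mp hw).2⟩) u (mem_inter.mpr ⟨hu, hui⟩)
  exact hwu ▸ (mem_inter.mp hw).1

theorem proj_sdiff_of_subset {S : Finset ℕ} (hX : ∀ i, (X ∩ V i).card = 1) (hS : S ⊆ X) :
    proj V (X \ S) = univ \ proj V S := by
  ext i
  obtain ⟨u, hu⟩ := card_eq_one.mp (hX i)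
  have huXV : u ∈ X ∩ V i := hu ▸ mem_singleton_self u
  rw [mem_sdiff, mem_proj_iff_of_subset (hX i) sdiff_subset (mem_inter.mp huXV).1
      (mem_inter.mp huXV).2, mem_proj_iff_of_subset (hX i) hS (mem_inter.mp huXV).1
      (mem_inter.mp huXV).2, mem_sdiff]
  simp [(mem_inter.mp huXV).1]

theorem eq_of_proj_eq_of_subset {C C' : Finset ℕ} (hX : ∀ i, (X ∩ V i).card = 1)
    (hXV : ∀ u ∈ X, ∃ i, u ∈ V i) (hC : C ⊆ X) (hC' : C' ⊆ X) (h : proj V C = proj V C') :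
    C = C' := by
  ext u
  by_cases hu : u ∈ X
  · obtain ⟨i, hui⟩ := hXV u hu
    rw [← mem_proj_iff_of_subset (hX i) hC hu hui, ← mem_proj_iff_of_subset (hX i) hC' hu hui,
      h]
  · exact iff_of_false (fun h => hu (hC h)) (fun h => hu (hC' h))

theorem sdiff_mem_interStruct_of_compl_proj_mem {Hs : Finset (Finset ℕ)}
    {J : Finset (Finset (Fin k))} {S : Finset ℕ} (hIJ : (interStruct Hs X).image (proj V) = J)
    (hX : ∀ i, (X ∩ V i).card = 1) (hXV : ∀ u ∈ X, ∃ i, u ∈ V i) (hS : S ⊆ X)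
    (h : univ \ proj V S ∈ J) : X \ S ∈ interStruct Hs X := by
  rw [← hIJ, ← proj_sdiff_of_subset hX hS] at h
  obtain ⟨C, hC, hCS⟩ := mem_image.mp h
  have hCX : C ⊆ X := by
    obtain ⟨X', -, rfl⟩ := mem_image.mp hC
    exact inter_subset_left
  rwa [← eq_of_proj_eq_of_subset hX hXV hCX sdiff_subset hCS]

end Projection

section Pattern

variable {α : Type*} [Fintype α] [DecidableEq α] {J : Finset (Finset α)} {c₀ : α}

theorem erase_mem_of_card_filter_card_eq (hc₀ : univ.erase c₀ ∉ J)
    (hJ : (J.filter fun A => A.card = Fintype.card α - 1).card = Fintype.card α - 1)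
    {c : α} (hc : c ≠ c₀) : univ.erase c ∈ J := by
  set T := (univ.erase c₀).image fun c => (univ : Finset α).erase c
  have hsub : J.filter (fun A => A.card = Fintype.card α - 1) ⊆ T := by
    intro A hA
    obtain ⟨hAJ, hAcard⟩ := mem_filter.mp hA
    obtain ⟨c', hc'⟩ : ∃ c', Aᶜ = {c'} := card_eq_one.mp (by
      rw [card_compl, hAcard]
      have : 0 < Fintype.card α := Fintype.card_pos_iff.mpr ⟨c₀⟩
      omega)
    have hA : A = univ.erase c' := by rw [← compl_singleton, ← hc', compl_compl]
    refine mem_image.mpr ⟨c', mem_erase.mpr ⟨?_, mem_univ _⟩, hA.symm⟩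
    rintro rfl
    exact hc₀ (hA ▸ hAJ)
  have hTcard : T.card = Fintype.card α - 1 := by
    rw [card_image_of_injOn ((erase_injOn _).mono (by simp)), card_erase_of_mem (mem_univ _),
      card_univ]
  have hT : J.filter (fun A => A.card = Fintype.card α - 1) = T :=
    eq_of_subset_of_card_le hsub (by rw [hTcard, hJ])
  have hcT : univ.erase c ∈ T := mem_image.mpr ⟨c, mem_erase.mpr ⟨hc, mem_univ _⟩, rfl⟩
  exact (mem_filter.mp (hT ▸ hcT)).1

theorem compl_mem_of_erase_mem (hJcap : ∀ A ∈ J, ∀ B ∈ J, A ∩ B ∈ J)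
    (h : ∀ c ≠ c₀, univ.erase c ∈ J) {S : Finset α} (hS : S.Nonempty) (hc₀S : c₀ ∉ S) :
    univ \ S ∈ J := by
  induction hS using Nonempty.cons_induction with
  | singleton c => simpa [sdiff_singleton_eq_erase] using h c (by simpa [eq_comm] using hc₀S)
  | cons c S hcS hS ih =>
    have hsplit : univ \ cons c S hcS = univ.erase c ∩ (univ \ S) := by
      ext x
      simp only [mem_sdiff, mem_cons, mem_inter, mem_erase, mem_univ, true_and]
      tauto
    rw [hsplit]
    simp only [mem_cons, not_or] at hc₀S
    exact hJcap _ (h c (Ne.symm hc₀S.1)) _ (ih hc₀S.2)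

end Pattern

def SunflowerRichAt (Hs : Finset (Finset ℕ)) (s v : ℕ) : Prop :=
  ∀ X ∈ Hs, v ∈ X → ∀ S ⊆ X, S.Nonempty → v ∉ S →
    ∃ D ⊆ Hs, X ∈ D ∧ D.card = s ∧ IsDeltaSystem D (X \ S)

theorem IsHomogeneousWith.sunflowerRichAt {n k s : ℕ} {Hs : Finset (Finset ℕ)}
    {J : Finset (Finset (Fin k))} (hhom : IsHomogeneousWith n k s Hs J)
    (hHs : Hs ⊆ powersetCard k (Icc 1 n)) (hJ : (J.filter fun A => A.card = k - 1).card = k - 1)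
    {E : Finset ℕ} (hE : E ∈ Hs) {v : ℕ} (hv : v ∈ E)
    (hvall : ∀ C ∈ interStruct Hs E, C.card = k - 1 → v ∈ C) : SunflowerRichAt Hs s v := by
  obtain ⟨V, hVdisj, hVcover, hV1, -, hIJ, hJcap, hsun⟩ := hhom
  have hXV : ∀ X ∈ Hs, ∀ u ∈ X, ∃ i, u ∈ V i := fun X hX u hu => by
    obtain ⟨i, -, hi⟩ := mem_sup.mp (hVcover ▸ (mem_powersetCard.mp (hHs hX)).1 hu)
    exact ⟨i, hi⟩
  have hsdiff_mem : ∀ X ∈ Hs, ∀ S ⊆ X, univ \ proj V S ∈ J → X \ S ∈ interStruct Hs X :=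
    fun X hX _ hSX => sdiff_mem_interStruct_of_compl_proj_mem (hIJ X hX) (hV1 X hX) (hXV X hX) hSX
  obtain ⟨c₀, hvc₀⟩ := hXV E hE v hv
  -- `E \ {v}` would be a `(k-1)`-set of `I(E,H*)` missing `v`
  have hc₀ : univ.erase c₀ ∉ J := by
    intro h
    have hmem := hsdiff_mem E hE {v} (singleton_subset_iff.mpr hv)
      (by rwa [proj_singleton hVdisj hvc₀, ← compl_eq_univ_sdiff, compl_singleton])
    have hcard : (E \ {v}).card = k - 1 := by
      rw [card_sdiff_of_subset (singleton_subset_iff.mpr hv), card_singleton,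
        (mem_powersetCard.mp (hHs hE)).2]
    exact (mem_sdiff.mp (hvall _ hmem hcard)).2 (mem_singleton_self v)
  have hJall : ∀ S : Finset (Fin k), S.Nonempty → c₀ ∉ S → univ \ S ∈ J :=
    fun S hS hc₀S => compl_mem_of_erase_mem hJcap
      (fun c hc => erase_mem_of_card_filter_card_eq hc₀ (by simpa using hJ) hc) hS hc₀S
  intro X hX hvX S hSX hS hvS
  obtain ⟨u, hu⟩ := hS
  obtain ⟨i, hui⟩ := hXV X hX u (hSX hu)
  refine hsun X hX _ (hsdiff_mem X hX S hSX (hJall _ ⟨i, mem_proj_of_mem hu hui⟩ ?_))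
  rwa [mem_proj_iff_of_subset (hV1 X hX c₀) hSX hvX hvc₀]

namespace SunflowerRichAt

variable {Hs : Finset (Finset ℕ)} {s v : ℕ}

theorem exists_mem_inter_card_eq (h : SunflowerRichAt Hs s v) {E F : Finset ℕ} (hE : E ∈ Hs)
    (hv : v ∈ E) (hvF : v ∉ F) (hs : F.card + 2 ≤ s) {m : ℕ} (hm : m ≤ (F ∩ E).card) :
    ∃ E' ∈ Hs, v ∈ E' ∧ (E' ∩ F).card = m := by
  rcases hm.eq_or_lt with rfl | hlt
  · exact ⟨E, hE, hv, by rw [inter_comm]⟩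
  obtain ⟨S, hS, hScard⟩ := (F ∩ E).exists_subset_card_eq (n := (F ∩ E).card - m) (Nat.sub_le _ _)
  have hvS : v ∉ S := fun hvS => hvF (mem_inter.mp (hS hvS)).1
  obtain ⟨D, hDHs, hED, hDcard, hD⟩ := h E hE hv S (hS.trans inter_subset_right)
    (card_pos.mp (by omega)) hvS
  -- a petal `E'` of `D` that meets `F` only inside `E`
  obtain ⟨P, hPD, hPcard, hPF⟩ := hD.exists_subset_disjoint_sdiff sdiff_subset hED F 1
    (by omega)
  obtain ⟨E', rfl⟩ := card_eq_one.mp hPcard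
  have hE'D := mem_erase.mp (hPD (mem_singleton_self E'))
  have hEE' : E ∩ E' = E \ S := hD.2 E hED E' hE'D.2 hE'D.1.symm
  have hE'F : E' ∩ F = (F ∩ E) \ S := by
    ext w
    have hw := Finset.ext_iff.mp hEE' w
    have hwF : w ∈ E' \ E → w ∉ F := fun hw => disjoint_left.mp (hPF E' (mem_singleton_self E')) hw
    have hwS : w ∈ S → w ∈ F ∩ E := fun hw => hS hw
    simp only [mem_inter, mem_sdiff] at hw hwF hwS ⊢
    tauto
  refine ⟨E', hDHs hE'D.2, (mem_inter.mp (hEE' ▸ mem_sdiff.mpr ⟨hv, hvS⟩)).2, ?_⟩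
  rw [hE'F, card_sdiff_of_subset hS, hScard]
  omega

end SunflowerRichAt

theorem Fin.exists_pos_sum_eq_of_eq_one {p d : ℕ} (hp : 2 ≤ p) (hpd : p ≤ d) (i₀ : Fin p) :
    ∃ b : Fin p → ℕ, (∀ i, 0 < b i) ∧ ∑ i, b i = d ∧ b i₀ = 1 := by
  have : Nontrivial (Fin p) := Fin.nontrivial_iff_two_le.mpr hp
  obtain ⟨i₁, hi₁⟩ := exists_ne i₀
  refine ⟨fun i => 1 + if i = i₁ then d - p else 0, fun i => by positivity, ?_, by simp [hi₁.symm]⟩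
  simp only [sum_add_distrib, sum_ite_eq', mem_univ, if_true, sum_const,
    smul_eq_mul, mul_one]
  omega

theorem famContainsADSystem_of_sunflowers {p k d : ℕ} {a b : Fin p → ℕ}
    {Fam : Finset ℕ → Prop} {E0 F : Finset ℕ} {A : Fin p → Finset ℕ} {i₀ : Fin p}
    (hk : 0 < k) (hb : ∀ i, 0 < b i) (hbd : ∑ i, b i = d) (hbi₀ : b i₀ = 1) (hE0 : Fam E0)
    (hA : IsAPartition p a A E0) (hF : Fam F) (hFE0 : F ≠ E0) (hE0F : E0 ∩ F = E0 \ A i₀)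
    (hFk : F.card ≤ k) (D : Fin p → Finset (Finset ℕ))
    (hD : ∀ i ≠ i₀, (∀ X ∈ D i, Fam X ∧ X.card ≤ k) ∧ E0 ∈ D i ∧ k * d + 1 ≤ (D i).card ∧
      IsDeltaSystem (D i) (E0 \ A i)) :
    FamContainsADSystem p a d Fam := by
  have hne : ∀ i ∈ univ.erase i₀, i ≠ i₀ := fun i hi => (mem_erase.mp hi).1
  have hbsum : ∑ i ∈ univ.erase i₀, b i + 1 = d := by
    rw [← hbi₀, sum_erase_add _ _ (mem_univ i₀), hbd]
  obtain ⟨P, hP, hPF, hPdisj⟩ := exists_petals_pairwise_disjoint_sdiff E0 (F \ E0) hk D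
    (fun i => E0 \ A i) b (univ.erase i₀) (fun i hi => (hD i (hne i hi)).2.2.2)
    (fun _ _ => sdiff_subset) (fun i hi => (hD i (hne i hi)).2.1)
    (fun i hi X hX => (card_le_card sdiff_subset).trans ((hD i (hne i hi)).1 X hX).2)
    (fun i hi => by
      have := (hD i (hne i hi)).2.2.1
      have := (card_le_card (sdiff_subset (s := F) (t := E0))).trans hFk
      nlinarith)
  have hQ : ∀ i, ∀ X ∈ Function.update P i₀ {F} i, (i = i₀ ∧ X = F) ∨ (i ≠ i₀ ∧ X ∈ P i) :=
    fun i X hX => by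
      by_cases hi : i = i₀
      · subst hi
        exact Or.inl ⟨rfl, by simpa using hX⟩
      · exact Or.inr ⟨hi, by simpa [hi] using hX⟩
  have hmem : ∀ {i}, i ≠ i₀ → i ∈ univ.erase i₀ := fun hi => mem_erase.mpr ⟨hi, mem_univ _⟩
  refine famContainsADSystem_of_petals hb hbd hE0 hA (Function.update P i₀ {F}) (fun i => ?_)
    (fun i X hX => ?_) (fun i j X hX Y hY hXY => ?_)
  · by_cases hi : i = i₀
    · subst hi
      rw [Function.update_self, card_singleton, hbi₀]
    · rw [Function.update_of_ne hi]
      exact (hP i (hmem hi)).2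
  · rcases hQ i X hX with ⟨rfl, rfl⟩ | ⟨hi, hXP⟩
    · exact ⟨hF, hFE0, hE0F⟩
    · obtain ⟨hXE0, hXD⟩ := mem_erase.mp ((hP i (hmem hi)).1 hXP)
      obtain ⟨hDFam, hE0D, -, hDi⟩ := hD i hi
      exact ⟨(hDFam X hXD).1, hXE0, hDi.2 E0 hE0D X hXD hXE0.symm⟩
  · rcases hQ i X hX with ⟨rfl, rfl⟩ | ⟨hi, hXP⟩ <;>
      rcases hQ j Y hY with ⟨rfl, rfl⟩ | ⟨hj, hYP⟩
    · simp at hXY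
    · exact (hPF j (hmem hj) Y hYP).symm
    · exact hPF i (hmem hi) X hXP
    · exact hPdisj i (hmem hi) j (hmem hj) X hXP Y hYP hXY

theorem SunflowerRichAt.mem_of_sub_le_card_inter {Hs H : Finset (Finset ℕ)} {p k d s v : ℕ}
    {a : Fin p → ℕ} (h : SunflowerRichAt Hs s v) (hp : 2 ≤ p) (hpd : p ≤ d)
    (hs : k * d + 1 ≤ s) (ha : ∀ i, 0 < a i) (hsum : ∑ i, a i = k)
    (hHk : ∀ X ∈ H, X.card = k) (hfree : ¬ ContainsADSystem p a d H) (hsub : Hs ⊆ H)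
    {E F : Finset ℕ} (hE : E ∈ Hs) (hv : v ∈ E) (hF : F ∈ H) (i₀ : Fin p)
    (hFE : k - a i₀ ≤ (F ∩ E).card) : v ∈ F := by
  by_contra hvF
  have ha₀ : a i₀ ≤ k := hsum ▸ single_le_sum (fun i _ => (ha i).le) (mem_univ i₀)
  have hk : 0 < k := (ha i₀).trans_le ha₀
  obtain ⟨E', hE', hvE', hE'F⟩ :=
    h.exists_mem_inter_card_eq hE hv hvF (by rw [hHk F hF]; nlinarith) hFE
  have hE'k := hHk E' (hsub hE')
  obtain ⟨A, hA, hAi₀⟩ := exists_isAPartition_eq i₀ (sdiff_subset : E' \ F ⊆ E')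
    (by have := card_sdiff_add_card_inter E' F; omega) (hE'k.trans hsum.symm)
  have hAi : ∀ i ≠ i₀, A i ⊆ E' ∧ (A i).Nonempty ∧ v ∉ A i := fun i hi =>
    ⟨hA.2.2 ▸ le_sup (mem_univ i), card_pos.mp (hA.1 i ▸ ha i),
      fun hvA => disjoint_left.mp (hA.2.1 i i₀ hi) hvA (hAi₀ ▸ mem_sdiff.mpr ⟨hvE', hvF⟩)⟩
  have hD : ∀ i, ∃ D : Finset (Finset ℕ), i ≠ i₀ →
      D ⊆ Hs ∧ E' ∈ D ∧ D.card = s ∧ IsDeltaSystem D (E' \ A i) := fun i => by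
    by_cases hi : i = i₀
    · exact ⟨∅, fun h => absurd hi h⟩
    · obtain ⟨hAE', hAne, hvA⟩ := hAi i hi
      obtain ⟨D, hD⟩ := h E' hE' hvE' (A i) hAE' hAne hvA
      exact ⟨D, fun _ => hD⟩
  choose D hD using hD
  obtain ⟨b, hb, hbd, hbi₀⟩ := Fin.exists_pos_sum_eq_of_eq_one hp hpd i₀
  refine hfree (famContainsADSystem_of_sunflowers hk hb hbd hbi₀ (hsub hE') hA hF
    (fun hFE' => hvF (hFE' ▸ hvE')) (by rw [hAi₀, sdiff_sdiff_self_left]) (hHk F hF).le D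
    fun i hi => ?_)
  obtain ⟨hDHs, hE'D, hDcard, hDi⟩ := hD i hi
  exact ⟨fun X hX => ⟨hsub (hDHs hX), (hHk X (hsub (hDHs hX))).le⟩, hE'D, hDcard ▸ hs, hDi⟩

/-- Let `d ≥ p ≥ 2`, `k > p`, `s ≥ k·d + 1`, `a⃗` positive with
`Σ a_i = k`. Let `H ⊆ binom([n],k)` contain no `(a⃗,d)`-Δ-system, and let `H*` be an
`s`-homogeneous subgraph of `H` with pattern `J`, where `r(J) = k-1` and `J` has exactly
`k-1` sets of size `k-1`. If `v ∈ E ∈ H*` is the vertex contained in all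
`(k-1)`-element sets of `I(E,H*)`, then `v ∈ F` for every `F ∈ H` with
`|F ∩ E| ≥ k - a_1`. -/
theorem stmt17 (n p k d s : ℕ) (hp : 2 ≤ p) (hpd : p ≤ d)
    (hs : k * d + 1 ≤ s)
    (a : Fin p → ℕ) (ha : ∀ i, 0 < a i) (hsum : ∑ i, a i = k)
    (H Hstar : Finset (Finset ℕ)) (J : Finset (Finset (Fin k)))
    (hH : H ⊆ Finset.powersetCard k (Finset.Icc 1 n))
    (hfree : ¬ ContainsADSystem p a d H)
    (hsub : Hstar ⊆ H)
    (hhom : IsHomogeneousWith n k s Hstar J)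
    (hJ : (J.filter (fun A => A.card = k - 1)).card = k - 1)
    (E : Finset ℕ) (hE : E ∈ Hstar) (v : ℕ) (hv : v ∈ E)
    (hvall : ∀ C ∈ interStruct Hstar E, C.card = k - 1 → v ∈ C)
    (F : Finset ℕ) (hF : F ∈ H) (hFE : k - a ⟨0, by omega⟩ ≤ (F ∩ E).card) :
    v ∈ F :=
  (hhom.sunflowerRichAt (hsub.trans hH) hJ hE hv hvall).mem_of_sub_le_card_inter hp hpd hs ha
    hsum (fun _ hX => (mem_powersetCard.mp (hH hX)).2) hfree hsub hE hv hF _ hFE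
end
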